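/- Let ζ ∈ S∞ with ζ not the identity, let up(ζ) = {j : ζ⁻¹(j) < j} = {j_1 < j_2 < ··· < j_k}, and define w ∈ S∞ by w(i) = j_i for 1 ≤ i ≤ k and by letting w(k+1), w(k+2), ... run through the complement of up(ζ) in {1,2,3,...} in increasing order. Then ζ⁻¹·w ≤_k w in the k-Bruhat order; in particular the interval [ζ⁻¹w, w]_k is nonempty and ζ = w·(ζ⁻¹w)⁻¹. -/

import Mathlib

/-
Common definitions for "A Monoid for the universal k-Bruhat order"
(Bergeron–Sottile).

`S∞` is modeled as `Equiv.Perm ℕ+`; membership in `S∞` (finite support)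
is the predicate `FinSupp`.
-/

noncomputable section

open scoped Classical

/-- `S∞`: permutations of the positive integers `{1,2,3,...}`. -/
abbrev Sinf : Type := Equiv.Perm ℕ+

/-- A permutation belongs to `S∞` iff it moves only finitely many points. -/
def FinSupp (w : Sinf) : Prop := {i : ℕ+ | w i ≠ i}.Finite

/-- `ℓ(w)`: the number of inversions, i.e. pairs `i < j` with `w i > w j`. -/
def len (w : Sinf) : ℕ := {p : ℕ+ × ℕ+ | p.1 < p.2 ∧ w p.2 < w p.1}.ncard

/-- The cover relation of the `k`-Bruhat order: `w` covers `u` iff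
`ℓ(w) = ℓ(u) + 1` and `w = u·(a b)` for some `a ≤ k < b`. -/
def kCover (k : ℕ+) (u w : Sinf) : Prop :=
  len w = len u + 1 ∧ ∃ a b : ℕ+, a ≤ k ∧ k < b ∧ w = u * Equiv.swap a b

/-- The `k`-Bruhat order `≤ₖ`: the partial order generated by `kCover`. -/
def kBruhat (k : ℕ+) : Sinf → Sinf → Prop := Relation.ReflTransGen (kCover k)

/-- `ℓᵤ(ζ) = ℓ(ζu) − ℓ(u)` for any (some chosen) `u ∈ S∞`, `k` with `u ≤ₖ ζu`. -/
def ellU (ζ : Sinf) : ℕ :=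
  if h : ∃ p : Sinf × ℕ+, FinSupp p.1 ∧ kBruhat p.2 p.1 (ζ * p.1) then
    len (ζ * h.choose.1) - len h.choose.1
  else 0

/-- `ℚ[S∞]` as a `ℚ`-vector space with basis the permutations. -/
abbrev QS : Type := Sinf →₀ ℚ

/-- The operator `û_{αβ}` on `ℚ[S∞]`: on a basis permutation `ζ` it gives
`(α β)·ζ` if `ℓᵤ((α β)ζ) = ℓᵤ(ζ) + 1`, and `0` otherwise. -/
def uhat (α β : ℕ+) : QS →ₗ[ℚ] QS :=
  Finsupp.lsum ℚ (fun ζ : Sinf =>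
    LinearMap.toSpanSingleton ℚ QS
      (if ellU (Equiv.swap α β * ζ) = ellU ζ + 1 then
        Finsupp.single (Equiv.swap α β * ζ) (1 : ℚ)
      else 0))

/-- Index type for the generators `u_{αβ}`, `0 < α < β`. -/
abbrev Gen : Type := {p : ℕ+ × ℕ+ // p.1 < p.2}

/-- For `L = [(α₁,β₁),…,(αₙ,βₙ)]`, the composition `û_{αₙβₙ}∘⋯∘û_{α₁β₁}`
(the operator `û_{α₁β₁}` acts first). -/
def wordOp (L : List Gen) : QS →ₗ[ℚ] QS :=
  L.foldl (fun f p => (uhat p.val.1 p.val.2).comp f) LinearMap.id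

/-- The universal `k`-Bruhat order `≼`. -/
def uBruhat (η ζ : Sinf) : Prop :=
  ∃ u : Sinf, FinSupp u ∧ ∃ k : ℕ+, kBruhat k u (η * u) ∧ kBruhat k (η * u) (ζ * u)

/-- `ζ` covers `η` in `≼`. -/
def uCover (η ζ : Sinf) : Prop :=
  uBruhat η ζ ∧ η ≠ ζ ∧ ∀ ξ : Sinf, uBruhat η ξ → uBruhat ξ ζ → ξ = η ∨ ξ = ζ

/-- `up(ζ) = {j : ζ⁻¹(j) < j}`. -/
def upS (ζ : Sinf) : Set ℕ+ := {j | ζ⁻¹ j < j}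

/-- `dw(ζ) = {j : ζ⁻¹(j) > j}`. -/
def dwS (ζ : Sinf) : Set ℕ+ := {j | j < ζ⁻¹ j}

/-- `R_u(ζ)`: the `u`-reduced sequences for `ζ`, i.e. sequences
`((α₁,β₁),…,(αₙ,βₙ))` with `û_{αₙβₙ}∘⋯∘û_{α₁β₁}(1) = ζ`. -/
def Rset (ζ : Sinf) : Set (List Gen) :=
  {L | wordOp L (Finsupp.single 1 1) = Finsupp.single ζ 1}

/-- `H_p(ζ)`: empty if some `pᵢ < 0`; otherwise those `u`-reduced sequences for `ζ`
whose `α`'s strictly increase within each consecutive block of sizes `p₁,…,p_r`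
(indices `i, i+1` lie in the same block iff `i+1` is not a partial sum of `p`). -/
def Hset (p : List ℤ) (ζ : Sinf) : Set (List Gen) :=
  {L | L ∈ Rset ζ ∧ (∀ x ∈ p, 0 ≤ x) ∧
    ∀ (i : ℕ) (q r : Gen), L[i]? = some q → L[i + 1]? = some r →
      (∀ t : ℕ, (p.take t).sum ≠ (i : ℤ) + 1) → q.val.1 < r.val.1}

/-- `E_p(ζ)`: as `H_p(ζ)` but with the `α`'s strictly decreasing in each block. -/
def Eset (p : List ℤ) (ζ : Sinf) : Set (List Gen) :=
  {L | L ∈ Rset ζ ∧ (∀ x ∈ p, 0 ≤ x) ∧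
    ∀ (i : ℕ) (q r : Gen), L[i]? = some q → L[i + 1]? = some r →
      (∀ t : ℕ, (p.take t).sum ≠ (i : ℤ) + 1) → r.val.1 < q.val.1}

/-- `E'_p(ζ)`: as `H_p(ζ)` but with the `β`'s strictly decreasing in each block. -/
def E'set (p : List ℤ) (ζ : Sinf) : Set (List Gen) :=
  {L | L ∈ Rset ζ ∧ (∀ x ∈ p, 0 ≤ x) ∧
    ∀ (i : ℕ) (q r : Gen), L[i]? = some q → L[i + 1]? = some r →
      (∀ t : ℕ, (p.take t).sum ≠ (i : ℤ) + 1) → r.val.2 < q.val.2}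

/-- The integer sequence `λ_σ = (λ_{σ(i)} + i − σ(i))ᵢ` (here `0`-indexed). -/
def lamSeq (r : ℕ) (lam : Fin r → ℕ) (σ : Equiv.Perm (Fin r)) : List ℤ :=
  (List.finRange r).map (fun i => (lam (σ i) : ℤ) + (i : ℤ) - ((σ i : ℕ) : ℤ))

/-- `c_λ^ζ := Σ_{σ ∈ S_r} ε(σ)·|H_{λ_σ}(ζ)|`. -/
def cCoef (r : ℕ) (lam : Fin r → ℕ) (ζ : Sinf) : ℤ :=
  ∑ σ : Equiv.Perm (Fin r),
    ((Equiv.Perm.sign σ : ℤˣ) : ℤ) * ((Hset (lamSeq r lam σ) ζ).ncard : ℤ)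

/-- The free monoid-with-zero on the generators `u_{αβ}`. -/
abbrev FM : Type := WithZero (FreeMonoid Gen)

/-- The generator `u_{αβ}` as an element of `FM`. -/
def g (α β : ℕ+) (h : α < β) : FM :=
  ((FreeMonoid.of (⟨(α, β), h⟩ : Gen) : FreeMonoid Gen) : FM)

/-- The defining relations (1)–(5) of the monoid `M`. -/
inductive MRel : FM → FM → Prop
  | r1 (α β γ δ : ℕ+) (h1 : α < β) (h2 : β < γ) (h3 : γ < δ) :
      MRel (g β γ h2 * g γ δ h3 * g α γ (h1.trans h2))
           (g β δ (h2.trans h3) * g α β h1 * g β γ h2)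
  | r2 (α β γ δ : ℕ+) (h1 : α < β) (h2 : β < γ) (h3 : γ < δ) :
      MRel (g α γ (h1.trans h2) * g γ δ h3 * g β γ h2)
           (g β γ h2 * g α β h1 * g β δ (h2.trans h3))
  | r3a (α β γ δ : ℕ+) (h1 : α < β) (h2 : γ < δ) (h : β < γ) :
      MRel (g α β h1 * g γ δ h2) (g γ δ h2 * g α β h1)
  | r3b (α β γ δ : ℕ+) (h1 : α < β) (h2 : γ < δ) (h3 : α < γ) (h4 : δ < β) :
      MRel (g α β h1 * g γ δ h2) (g γ δ h2 * g α β h1)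
  | r4a (α β γ δ : ℕ+) (h1 : α ≤ β) (h2 : β < γ) (h3 : γ ≤ δ) :
      MRel (g α γ (h1.trans_lt h2) * g β δ (h2.trans_le h3)) 0
  | r4b (α β γ δ : ℕ+) (h1 : α ≤ β) (h2 : β < γ) (h3 : γ ≤ δ) :
      MRel (g β δ (h2.trans_le h3) * g α γ (h1.trans_lt h2)) 0
  | r5a (α β γ : ℕ+) (h1 : α < β) (h2 : β < γ) :
      MRel (g β γ h2 * g α β h1 * g β γ h2) 0
  | r5b (α β γ : ℕ+) (h1 : α < β) (h2 : β < γ) :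
      MRel (g α β h1 * g β γ h2 * g α β h1) 0

/-- The congruence generated by the relations (1)–(5); the monoid `M` is its
quotient `MCon.Quotient`. -/
def MCon : Con FM := conGen MRel

/-- The word `u_{αₙβₙ}⋯u_{α₁β₁} ∈ FM` for `L = [(α₁,β₁),…,(αₙ,βₙ)]`. -/
def wordFM (L : List Gen) : FM :=
  ((FreeMonoid.ofList L.reverse : FreeMonoid Gen) : FM)

/-- The generator `u_{αβ}` in the free monoid (no zero). -/
def g3 (α β : ℕ+) (h : α < β) : FreeMonoid Gen := FreeMonoid.of ⟨(α, β), h⟩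

/-- The relations (1)–(3) only, on the free monoid (no zero). -/
inductive MRel3 : FreeMonoid Gen → FreeMonoid Gen → Prop
  | r1 (α β γ δ : ℕ+) (h1 : α < β) (h2 : β < γ) (h3 : γ < δ) :
      MRel3 (g3 β γ h2 * g3 γ δ h3 * g3 α γ (h1.trans h2))
            (g3 β δ (h2.trans h3) * g3 α β h1 * g3 β γ h2)
  | r2 (α β γ δ : ℕ+) (h1 : α < β) (h2 : β < γ) (h3 : γ < δ) :
      MRel3 (g3 α γ (h1.trans h2) * g3 γ δ h3 * g3 β γ h2)
            (g3 β γ h2 * g3 α β h1 * g3 β δ (h2.trans h3))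
  | r3a (α β γ δ : ℕ+) (h1 : α < β) (h2 : γ < δ) (h : β < γ) :
      MRel3 (g3 α β h1 * g3 γ δ h2) (g3 γ δ h2 * g3 α β h1)
  | r3b (α β γ δ : ℕ+) (h1 : α < β) (h2 : γ < δ) (h3 : α < γ) (h4 : δ < β) :
      MRel3 (g3 α β h1 * g3 γ δ h2) (g3 γ δ h2 * g3 α β h1)

/-- The word (with letters `(αᵢ,βᵢ)`) encoding a maximal chain of `[u,w]ₖ`:
there are permutations `u = u₀ <ₖ u₁ <ₖ ⋯ <ₖ uₙ = w` (each step a `k`-Bruhat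
cover) with `uᵢ₊₁ = (αᵢ₊₁ βᵢ₊₁)·uᵢ`. -/
def IsChainWord (k : ℕ+) (u w : Sinf) (L : List Gen) : Prop :=
  ∃ c : ℕ → Sinf, c 0 = u ∧ c L.length = w ∧
    ∀ (i : ℕ) (q : Gen), L[i]? = some q →
      kCover k (c i) (c (i + 1)) ∧ c (i + 1) = Equiv.swap q.val.1 q.val.2 * c i

/-- For an order-preserving `f`, the induced map on generators
`(α,β) ↦ (f α, f β)`. -/
def genMap (f : ℕ+ → ℕ+) (p : Gen) : Gen :=
  if h : f p.val.1 < f p.val.2 then ⟨(f p.val.1, f p.val.2), h⟩ else p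

/-- For an order-reversing `f`, the induced map on generators
`(α,β) ↦ (f β, f α)`. -/
def vmapGen (f : ℕ+ → ℕ+) (p : Gen) : Gen :=
  if h : f p.val.2 < f p.val.1 then ⟨(f p.val.2, f p.val.1), h⟩ else p

/-- The map `φ_a : {1,2,…} → {1,2,…}`, `i ↦ i` for `i < a` and `i ↦ i+1` for `i ≥ a`. -/
def phiF (a : ℕ+) (i : ℕ+) : ℕ+ := if i < a then i else i + 1

end

/-!
Write `u = ζ⁻¹w`. Then `u i ≤ w i` for `i ≤ k` and `u i ≥ w i` for `i > k`, and `w` is increasing on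
`{1,…,k}` and on `{k+1,…}`. From any such `u ≠ w` one climbs by a `k`-Bruhat cover: take `a ≤ k`
with `u a < w a` and `u a` maximal, then `b > k` with `u a < u b ≤ w a`, `w b ≤ u a` and `u b`
minimal (it exists by counting on the interval `(u a, w a]`). No position strictly between `a` and
`b` takes a value between `u a` and `u b`, so `u·(a b)` has exactly one more inversion than `u`; it
satisfies the same inequalities and is closer to `w` on `{1,…,k}`.
-/

open Equiv Set

def inversions (u : Sinf) : Set (ℕ+ × ℕ+) := {p | p.1 < p.2 ∧ u p.2 < u p.1}

theorem len_eq_ncard_inversions (u : Sinf) : len u = (inversions u).ncard := rfl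

namespace FinSupp

variable {u v : Sinf}

theorem inv (hu : FinSupp u) : FinSupp u⁻¹ := by
  rw [FinSupp, Perm.inv_def, Perm.set_support_symm_eq]
  exact hu

theorem mul (hu : FinSupp u) (hv : FinSupp v) : FinSupp (u * v) :=
  (hu.union hv).subset (Perm.set_support_mul_subset u v)

theorem swap (a b : ℕ+) : FinSupp (swap a b) :=
  (toFinite {a, b}).subset fun i hi => by
    by_contra h
    simp only [mem_insert_iff, mem_singleton_iff, not_or] at h
    exact hi (swap_apply_of_ne_of_ne h.1 h.2)

theorem finite_inversions (hu : FinSupp u) : (inversions u).Finite := by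
  obtain ⟨B, hB⟩ := hu.bddAbove
  have hfix : ∀ i, B < i → u i = i := fun i hi => by
    by_contra h
    exact hi.not_ge (hB h)
  refine ((finite_Iic B).prod (finite_Iic B)).subset fun ⟨i, j⟩ ⟨hij, hji⟩ => ?_
  have hj : j ≤ B := by
    by_contra! hj
    rw [hfix j hj] at hji
    have hui : u i ≠ i := fun h => by rw [h] at hji; exact hij.not_gt hji
    have : u (u i) ≠ u i := fun h => hui (u.injective h)
    exact (hB this).not_gt (hj.trans hji)
  exact ⟨hij.le.trans hj, hj⟩

theorem of_le_max {N : ℕ+} (h : ∀ j, u j ≤ max j N) : FinSupp u := by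
  refine (finite_Iic N).subset fun i hi => ?_
  by_contra hiN
  rw [mem_Iic, not_le] at hiN
  have hmaps : MapsTo u (Iic i) (Iic i) := fun j hj => (h j).trans (max_le hj hiN.le)
  obtain ⟨j, hj, hji⟩ := (((finite_Iic i).injOn_iff_bijOn_of_mapsTo hmaps).mp
    u.injective.injOn).surjOn (mem_Iic.mpr le_rfl)
  have hij : i ≤ j := by
    have := h j
    rw [hji] at this
    exact (le_max_iff.mp this).resolve_right hiN.not_ge
  exact hi (le_antisymm hj hij ▸ hji)

end FinSupp

theorem apply_le_max_of_strictMonoOn_Ioi {w : Sinf} {k N : ℕ+} (hw : StrictMonoOn w (Ioi k))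
    (hN : ∀ i ≤ k, w i ≤ N) (p : ℕ+) : w p ≤ max p N := by
  by_contra! hp
  have hpk : k < p := by
    by_contra! h
    exact (hN p h).not_gt ((le_max_right _ _).trans_lt hp)
  have hlt : ∀ q, w q ≤ max p N → q < p := fun q hq => by
    by_contra! hpq
    rcases hpq.eq_or_lt with rfl | hpq
    · exact hq.not_gt hp
    · exact hq.not_gt (hp.trans (hw hpk (hpk.trans hpq) hpq))
  -- so `w⁻¹` injects `[1, max p N]` into `[1, p)`
  have hcard := Finset.card_le_card_of_injOn (⇑w⁻¹)
    (s := Finset.Icc 1 (max p N)) (t := Finset.Ico 1 p)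
    (fun v hv => Finset.mem_Ico.mpr ⟨one_le, hlt _ (by simpa using (Finset.mem_Icc.mp hv).2)⟩)
    w⁻¹.injective.injOn
  rw [PNat.card_Icc, PNat.card_Ico] at hcard
  have : p ≤ max p N := le_max_left p N
  rw [← PNat.coe_le_coe] at this
  simp only [PNat.one_coe] at hcard
  generalize ((max p N : ℕ+) : ℕ) = m at hcard this
  have := p.pos
  omega

theorem FinSupp.of_strictMonoOn_Ioi {w : Sinf} {k : ℕ+} (hw : StrictMonoOn w (Ioi k)) :
    FinSupp w := by
  obtain ⟨N, hN⟩ := ((finite_Iic k).image w).bddAbove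
  exact of_le_max (apply_le_max_of_strictMonoOn_Ioi hw fun i hi => hN (mem_image_of_mem w hi))

-- Matches the inversions of `u` with those of `u·(a b)` other than `(a, b)`.
def swapPair (a b : ℕ+) (p : ℕ+ × ℕ+) : ℕ+ × ℕ+ :=
  if p.1 < a ∨ b < p.2 then Prod.map (swap a b) (swap a b) p else p

theorem swap_lt_swap_iff {a b i j : ℕ+} (hab : a < b) (h : i < a ∨ b < j) :
    swap a b i < swap a b j ↔ i < j := by
  rcases h with h | h
  · rw [swap_apply_of_ne_of_ne h.ne (h.trans hab).ne]
    grind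
  · rw [swap_apply_of_ne_of_ne (hab.trans h).ne' h.ne']
    grind

theorem swapPair_involutive {a b : ℕ+} (hab : a < b) : Function.Involutive (swapPair a b) := by
  rintro ⟨i, j⟩
  by_cases h : i < a ∨ b < j
  · have h' : swap a b i < a ∨ b < swap a b j := by
      rcases h with h | h
      · left; rwa [swap_apply_of_ne_of_ne h.ne (h.trans hab).ne]
      · right; rwa [swap_apply_of_ne_of_ne (hab.trans h).ne' h.ne']
    simp [swapPair, h, h']
  · simp [swapPair, h]

section MulSwap

variable {u : Sinf} {a b : ℕ+}

theorem inversions_mul_swap (hab : a < b) (hu : u a < u b)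
    (hgap : ∀ c, a < c → c < b → u c < u a ∨ u b < u c) :
    inversions (u * swap a b) = insert (a, b) (swapPair a b ⁻¹' inversions u) := by
  ext ⟨i, j⟩
  simp only [inversions, swapPair, mem_insert_iff, mem_preimage, mem_ofPred_eq, Perm.mul_apply,
    Prod.mk.injEq]
  split_ifs with h
  · have hne : ¬(i = a ∧ j = b) := by grind
    simp only [Prod.map, swap_lt_swap_iff hab h, hne, false_or]
  · simp only [not_or, not_lt] at h
    -- inside `[a, b]`, `hgap` makes each `u c` compare the same way with `u a` and with `u b`
    rcases h.1.eq_or_lt with rfl | hi <;> rcases h.2.eq_or_lt with rfl | hj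
    · simp [hab, hu]
    all_goals grind

theorem len_mul_swap (hfin : FinSupp u) (hab : a < b) (hu : u a < u b)
    (hgap : ∀ c, a < c → c < b → u c < u a ∨ u b < u c) :
    len (u * swap a b) = len u + 1 := by
  have hσ := swapPair_involutive hab
  have hnot : (a, b) ∉ swapPair a b ⁻¹' inversions u := by
    simp [swapPair, inversions, hu.not_gt]
  rw [len_eq_ncard_inversions, inversions_mul_swap hab hu hgap,
    ncard_insert_of_notMem hnot (hfin.finite_inversions.preimage hσ.injective.injOn),
    ncard_preimage_of_injective_subset_range hσ.injective (by simp [hσ.surjective.range_eq]),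
    len_eq_ncard_inversions]

theorem kCover_mul_swap {k : ℕ+} (hfin : FinSupp u) (ha : a ≤ k) (hb : k < b) (hu : u a < u b)
    (hgap : ∀ c, a < c → c < b → u c < u a ∨ u b < u c) :
    kCover k u (u * swap a b) :=
  ⟨len_mul_swap hfin (ha.trans_lt hb) hu hgap, a, b, ha, hb, rfl⟩

end MulSwap

section Grassmannian

variable {k : ℕ+} {u w : Sinf}

theorem eq_of_eqOn_Iic_of_ge_on_Ioi (hw : StrictMonoOn w (Ioi k)) (heq : ∀ i ≤ k, u i = w i)
    (hle : ∀ i, k < i → w i ≤ u i) : u = w := by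
  refine Equiv.ext fun j => ?_
  induction j using WellFoundedLT.induction with
  | _ j ih =>
  by_cases hjk : j ≤ k
  · exact heq j hjk
  by_contra hne
  obtain ⟨c, hc⟩ := u.surjective (w j)
  have hkj : k < j := not_le.mp hjk
  rcases lt_trichotomy c j with h | rfl | h
  · exact h.ne (w.injective ((ih c h).symm.trans hc))
  · exact hne hc
  · have hwc := hle c (hkj.trans h)
    rw [hc] at hwc
    exact hwc.not_gt (hw hkj (hkj.trans h) h)

theorem exists_swap_candidate (h₂ : ∀ i, k < i → w i ≤ u i) {a : ℕ+} (ha : u a < w a)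
    (hmax : ∀ c ≤ k, u a < u c → u c = w c) :
    ∃ c, k < c ∧ u a < u c ∧ u c ≤ w a ∧ w c ≤ u a := by
  -- otherwise `w u⁻¹` maps `(u a, w a]` injectively into itself, but misses `w a`
  by_contra! hB
  have hmaps : MapsTo (w * u⁻¹) (Ioc (u a) (w a)) (Ioc (u a) (w a)) := by
    intro v hv
    have hc : u (u⁻¹ v) = v := u.apply_symm_apply v
    rw [← hc] at hv
    show w (u⁻¹ v) ∈ _
    by_cases hck : u⁻¹ v ≤ k
    · rwa [← hmax _ hck hv.1]
    · have hkc : k < u⁻¹ v := not_le.mp hck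
      exact ⟨hB _ hkc hv.1 hv.2, (h₂ _ hkc).trans hv.2⟩
  obtain ⟨v, hv, hva⟩ := (((finite_Ioc _ _).injOn_iff_bijOn_of_mapsTo hmaps).mp
    (w * u⁻¹).injective.injOn).surjOn ⟨ha, le_rfl⟩
  have hva' : u⁻¹ v = a := w.injective hva
  exact hv.1.ne' (by simp [← hva'])

theorem exists_swap_with_gap (hw₁ : StrictMonoOn w (Iic k))
    (hw₂ : StrictMonoOn w (Ioi k)) (h₂ : ∀ i, k < i → w i ≤ u i) {a : ℕ+} (hak : a ≤ k)
    (ha : u a < w a) (hmax : ∀ c ≤ k, u a < u c → u c = w c) :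
    ∃ b, k < b ∧ u a < u b ∧ u b ≤ w a ∧ w b ≤ u a ∧
      ∀ c, a < c → c < b → u c < u a ∨ u b < u c := by
  obtain ⟨b, ⟨hkb, hab, hbw, hwb⟩, hmin⟩ := (InvImage.wf u wellFounded_lt).has_min
    {c | k < c ∧ u a < u c ∧ u c ≤ w a ∧ w c ≤ u a} (exists_swap_candidate h₂ ha hmax)
  refine ⟨b, hkb, hab, hbw, hwb, fun c hac hcb => ?_⟩
  by_contra! hc
  have hac' : u a < u c := hc.1.lt_of_ne (u.injective.ne hac.ne)
  have hcb' : u c < u b := hc.2.lt_of_ne (u.injective.ne hcb.ne)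
  by_cases hck : c ≤ k
  · have hwac := hw₁ hak hck hac
    rw [← hmax c hck hac'] at hwac
    exact (hcb'.trans_le hbw).not_gt hwac
  · have hkc : k < c := not_le.mp hck
    exact hmin c ⟨hkc, hac', hcb'.le.trans hbw, (hw₂ hkc hkb hcb).le.trans hwb⟩ hcb'

-- Truncated subtraction; it is only used where `u i ≤ w i` on `[1, k]`.
def kDefect (k : ℕ+) (u w : Sinf) : ℕ := ∑ i ∈ Finset.Icc 1 k, ((w i : ℕ) - u i)

theorem kDefect_mul_swap_lt {a b : ℕ+} (hak : a ≤ k) (hkb : k < b) (hab : u a < u b)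
    (hbw : u b ≤ w a) : kDefect k (u * swap a b) w < kDefect k u w := by
  refine Finset.sum_lt_sum (fun i hi => ?_) ⟨a, Finset.mem_Icc.mpr ⟨one_le, hak⟩, ?_⟩
  · have hib : i ≠ b := ((Finset.mem_Icc.mp hi).2.trans_lt hkb).ne
    rcases eq_or_ne i a with rfl | hia
    · simp only [Perm.mul_apply, swap_apply_left]
      exact Nat.sub_le_sub_left (PNat.coe_le_coe _ _ |>.mpr hab.le) _
    · simp [swap_apply_of_ne_of_ne hia hib]
  · simp only [Perm.mul_apply, swap_apply_left]
    have := (PNat.coe_lt_coe _ _).mpr hab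
    have := (PNat.coe_le_coe _ _).mpr hbw
    omega

theorem exists_kCover_kDefect_lt (hw₁ : StrictMonoOn w (Iic k)) (hw₂ : StrictMonoOn w (Ioi k))
    (hu : FinSupp u) (h₁ : ∀ i ≤ k, u i ≤ w i) (h₂ : ∀ i, k < i → w i ≤ u i)
    (hlt : ∃ i ≤ k, u i < w i) :
    ∃ v, kCover k u v ∧ FinSupp v ∧ (∀ i ≤ k, v i ≤ w i) ∧ (∀ i, k < i → w i ≤ v i) ∧
      kDefect k v w < kDefect k u w := by
  obtain ⟨a, ⟨hak, ha⟩, hamax⟩ := exists_max_image {i | i ≤ k ∧ u i < w i} u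
    ((finite_Iic k).subset fun _ hi => hi.1) hlt
  have hmax : ∀ c ≤ k, u a < u c → u c = w c := fun c hc hac =>
    (h₁ c hc).eq_or_lt.resolve_right fun h => (hamax c ⟨hc, h⟩).not_gt hac
  obtain ⟨b, hkb, hab, hbw, hwb, hgap⟩ := exists_swap_with_gap hw₁ hw₂ h₂ hak ha hmax
  refine ⟨u * swap a b, kCover_mul_swap hu hak hkb hab hgap, hu.mul (.swap a b), fun i hi => ?_,
    fun i hi => ?_, kDefect_mul_swap_lt hak hkb hab hbw⟩
  · have hib : i ≠ b := (hi.trans_lt hkb).ne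
    rcases eq_or_ne i a with rfl | hia
    · simpa using hbw
    · simpa [swap_apply_of_ne_of_ne hia hib] using h₁ i hi
  · have hia : i ≠ a := (hak.trans_lt hi).ne'
    rcases eq_or_ne i b with rfl | hib
    · simpa using hwb
    · simpa [swap_apply_of_ne_of_ne hia hib] using h₂ i hi

theorem kBruhat_of_le_on_Iic_of_ge_on_Ioi (hw₁ : StrictMonoOn w (Iic k))
    (hw₂ : StrictMonoOn w (Ioi k)) (hu : FinSupp u) (h₁ : ∀ i ≤ k, u i ≤ w i)
    (h₂ : ∀ i, k < i → w i ≤ u i) :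
    kBruhat k u w := by
  induction hD : kDefect k u w using Nat.strong_induction_on generalizing u with
  | _ n ih =>
  by_cases hlt : ∃ i ≤ k, u i < w i
  · obtain ⟨v, hcov, hv, hv₁, hv₂, hvD⟩ := exists_kCover_kDefect_lt hw₁ hw₂ hu h₁ h₂ hlt
    exact .head hcov (ih _ (hD ▸ hvD) hv hv₁ hv₂ rfl)
  · simp only [not_exists, not_and, not_lt] at hlt
    rw [eq_of_eqOn_Iic_of_ge_on_Ioi hw₂ (fun i hi => (h₁ i hi).antisymm (hlt i hi)) h₂]
    exact .refl

end Grassmannian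

theorem Izeta_general (ζ : Sinf) (hζ : FinSupp ζ)
    (k : ℕ+)
    (w : Sinf)
    (hw1 : ∀ i j : ℕ+, i < j → j ≤ k → w i < w j)
    (hw2 : ∀ i j : ℕ+, k < i → i < j → w i < w j)
    (hw3 : ∀ i : ℕ+, i ≤ k → ζ⁻¹ (w i) < w i)
    (hw4 : ∀ i : ℕ+, k < i → ¬(ζ⁻¹ (w i) < w i)) :
    kBruhat k (ζ⁻¹ * w) w ∧ ζ = w * (ζ⁻¹ * w)⁻¹ := by
  have hmono₁ : StrictMonoOn w (Iic k) := fun i _ j hj hij => hw1 i j hij hj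
  have hmono₂ : StrictMonoOn w (Ioi k) := fun i hi j _ hij => hw2 i j hi hij
  have hfin : FinSupp (ζ⁻¹ * w) := hζ.inv.mul (.of_strictMonoOn_Ioi hmono₂)
  refine ⟨kBruhat_of_le_on_Iic_of_ge_on_Ioi hmono₁ hmono₂ hfin (fun i hi => (hw3 i hi).le)
    (fun i hi => not_lt.mp (hw4 i hi)), ?_⟩
  group

/-- Theorem 3.1.5 of [BS97a]. For `ζ ≠ 1`, with
`k = |up(ζ)|` and `w` listing `up(ζ)` increasingly on positions `1,…,k` and
the complement increasingly afterwards, one has `ζ⁻¹w ≤ₖ w`; in particular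
`[ζ⁻¹w, w]ₖ ≠ ∅` and `ζ = w·(ζ⁻¹w)⁻¹`. -/
theorem Izeta (ζ : Sinf) (hζ : FinSupp ζ) (hne : ζ ≠ 1)
    (k : ℕ+) (hk : {j : ℕ+ | ζ⁻¹ j < j}.ncard = (k : ℕ))
    (w : Sinf)
    (hw1 : ∀ i j : ℕ+, i < j → j ≤ k → w i < w j)
    (hw2 : ∀ i j : ℕ+, k < i → i < j → w i < w j)
    (hw3 : ∀ i : ℕ+, i ≤ k → ζ⁻¹ (w i) < w i)
    (hw4 : ∀ i : ℕ+, k < i → ¬(ζ⁻¹ (w i) < w i)) :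
    kBruhat k (ζ⁻¹ * w) w ∧ ζ = w * (ζ⁻¹ * w)⁻¹ :=
  Izeta_general ζ hζ k w hw1 hw2 hw3 hw4
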